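/- For every ε ∈ (0, 1), K_ε(l) tends to π·(1 − ε) as the integer l tends to infinity. -/

import Mathlib

/-!
Since `a_l → ∞`, and the numerators `cos(πε) − a` and `a·cos(πε) − 1` as well as
`√(a² + 1 − 2a·cos(πε))` grow linearly in `a`, the two arccos arguments tend to `−1` and
`cos(πε)`. By continuity of `arccos`, `K_ε(l) → arccos(−1) − arccos(cos(πε)) = π − πε`.
-/

open Real

/-- `a_l = (l + √(l² − 4))/2`. -/
noncomputable def al (l : ℝ) : ℝ := (l + Real.sqrt (l ^ 2 - 4)) / 2

/-- `K_ε(l)`, the ε-norm of the derived category of the `l`-Kronecker quiver. -/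
noncomputable def Keps (ε l : ℝ) : ℝ :=
  Real.arccos ((Real.cos (π * ε) - al l) /
      Real.sqrt ((al l) ^ 2 + 1 - 2 * al l * Real.cos (π * ε))) -
    Real.arccos ((al l * Real.cos (π * ε) - 1) /
      Real.sqrt ((al l) ^ 2 + 1 - 2 * al l * Real.cos (π * ε)))

open Filter Topology

theorem tendsto_al_atTop : Tendsto al atTop atTop :=
  tendsto_atTop_mono (fun l => by rw [al, id]; linarith [sqrt_nonneg (l ^ 2 - 4)])
    (tendsto_id.atTop_div_const two_pos)

theorem tendsto_linear_div_sqrt_quadratic_atTop (p q b d : ℝ) :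
    Tendsto (fun a => (p * a + q) / √(a ^ 2 + b * a + d)) atTop (𝓝 p) := by
  -- substitute `t = a⁻¹`, which turns the quotient into a function continuous at `t = 0`
  have hcont : ContinuousAt (fun t : ℝ => (p + q * t) / √(1 + b * t + d * t ^ 2)) 0 :=
    ContinuousAt.div (by fun_prop) (by fun_prop) (by simp)
  have hlim := hcont.tendsto.comp tendsto_inv_atTop_zero
  simp only [Function.comp_def, mul_zero, add_zero, zero_pow two_ne_zero, sqrt_one,
    div_one] at hlim
  refine hlim.congr' ?_
  filter_upwards [eventually_gt_atTop 0] with a ha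
  have hnum : p * a + q = a * (p + q * a⁻¹) := by field_simp
  have hrad : a ^ 2 + b * a + d = a ^ 2 * (1 + b * a⁻¹ + d * a⁻¹ ^ 2) := by field_simp
  rw [hnum, hrad, sqrt_mul (sq_nonneg a), sqrt_sq ha.le, mul_div_mul_left _ _ ha.ne']

/-- For every `ε ∈ (0, 1)`, `K_ε(l) → π·(1 − ε)` as the integer `l → ∞`. -/
theorem stmt_17 (ε : ℝ) (hε : ε ∈ Set.Ioo (0 : ℝ) 1) :
    Filter.Tendsto (fun l : ℕ => Keps ε (l : ℝ)) Filter.atTop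
      (nhds (π * (1 - ε))) := by
  obtain ⟨hε0, hε1⟩ := hε
  set c := cos (π * ε)
  have harccos : arccos c = π * ε := arccos_cos (by positivity) (by nlinarith [pi_pos])
  have hrad (a : ℝ) : a ^ 2 + 1 - 2 * a * c = a ^ 2 + (-2 * c) * a + 1 := by ring
  have hfst : Tendsto (fun a => (c - a) / √(a ^ 2 + 1 - 2 * a * c)) atTop (𝓝 (-1)) := by
    simpa only [hrad, neg_one_mul, neg_add_eq_sub] using
      tendsto_linear_div_sqrt_quadratic_atTop (-1) c (-2 * c) 1
  have hsnd : Tendsto (fun a => (a * c - 1) / √(a ^ 2 + 1 - 2 * a * c)) atTop (𝓝 c) := by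
    simpa only [hrad, mul_comm c, ← sub_eq_add_neg] using
      tendsto_linear_div_sqrt_quadratic_atTop c (-1) (-2 * c) 1
  have hdiff := ((continuous_arccos.tendsto _).comp hfst).sub
    ((continuous_arccos.tendsto _).comp hsnd)
  rw [arccos_neg_one, harccos, ← mul_one_sub] at hdiff
  exact hdiff.comp (tendsto_al_atTop.comp tendsto_natCast_atTop_atTop)
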